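/- Let E be a real inner product space and let s > 0. The functional J : E → ℝ defined by J(x) = (1/2)·‖x − [x]ₛ‖² is Fréchet differentiable at every x ∈ E, and its derivative at x is the continuous linear functional h ↦ ⟪x − [x]ₛ, h⟫; that is, DJ(x) = x − [x]ₛ. -/

import Mathlib

/-!
Writing `d(y) = ‖y - [y]ₛ‖ = max (‖y‖ - s) 0`, the functional is `J = d² / 2`. Where `‖x‖ ≤ s`
we have `d(y) ≤ ‖y - x‖`, so `J` vanishes to second order at `x` and `DJ(x) = 0 = x - [x]ₛ`.
Where `‖x‖ > s`, `J(y) = (‖y‖ - s)² / 2` near `x`, whose gradient is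
`(‖x‖ - s) • x / ‖x‖ = x - [x]ₛ`.
-/

open scoped RealInnerProductSpace Topology
open Asymptotics Filter ContinuousLinearMap

variable {E : Type*} [NormedAddCommGroup E] [InnerProductSpace ℝ E]

noncomputable def ballProj (r : ℝ) (x : E) : E :=
  if ‖x‖ ≤ r then x else (r / ‖x‖) • x

lemma ballProj_of_norm_le {r : ℝ} {x : E} (h : ‖x‖ ≤ r) : ballProj r x = x := if_pos h

lemma ballProj_of_lt_norm {r : ℝ} {x : E} (h : r < ‖x‖) : ballProj r x = (r / ‖x‖) • x :=
  if_neg h.not_ge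

lemma norm_sub_ballProj {r : ℝ} (hr : 0 ≤ r) (x : E) :
    ‖x - ballProj r x‖ = max (‖x‖ - r) 0 := by
  rcases le_or_gt ‖x‖ r with h | h
  · rw [ballProj_of_norm_le h, sub_self, norm_zero, max_eq_right (by linarith)]
  · have hx : 0 < ‖x‖ := hr.trans_lt h
    have hcoef : 0 ≤ 1 - r / ‖x‖ := by rw [sub_nonneg, div_le_one hx]; exact h.le
    have hsub : x - (r / ‖x‖) • x = (1 - r / ‖x‖) • x := by rw [sub_smul, one_smul]
    rw [ballProj_of_lt_norm h, hsub, norm_smul, Real.norm_of_nonneg hcoef,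
      sub_mul, one_mul, div_mul_cancel₀ _ hx.ne', max_eq_left (by linarith)]

lemma norm_sub_ballProj_le_norm_sub {r : ℝ} (hr : 0 ≤ r) {x : E} (hx : ‖x‖ ≤ r) (y : E) :
    ‖y - ballProj r y‖ ≤ ‖y - x‖ := by
  rw [norm_sub_ballProj hr]
  exact max_le (by linarith [norm_sub_norm_le y x]) (norm_nonneg _)

lemma hasFDerivAt_norm_of_ne_zero {x : E} (hx : x ≠ 0) :
    HasFDerivAt (‖·‖) (‖x‖⁻¹ • innerSL ℝ x) x := by
  have hsq : HasFDerivAt (fun y : E => ‖y‖ ^ 2) (2 • innerSL ℝ x) x :=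
    (hasStrictFDerivAt_norm_sq x).hasFDerivAt
  convert hsq.sqrt (by positivity) using 1
  · ext y
    exact (Real.sqrt_sq (norm_nonneg y)).symm
  · rw [Real.sqrt_sq (norm_nonneg x), two_nsmul, ← two_smul ℝ, smul_smul]
    congr 1
    field_simp

lemma hasFDerivAt_half_sq_norm_sub_const (r : ℝ) {x : E} (hx : x ≠ 0) :
    HasFDerivAt (fun y : E => (1 / 2 : ℝ) * (‖y‖ - r) ^ 2)
      (innerSL ℝ (x - (r / ‖x‖) • x)) x := by
  refine ((((hasFDerivAt_norm_of_ne_zero hx).sub_const r).pow 2).const_mul (1 / 2 : ℝ)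
    |>.congr_fderiv ?_)
  have hx0 : ‖x‖ ≠ 0 := norm_ne_zero_iff.2 hx
  ext y
  simp only [smul_apply, sub_apply, coe_innerSL_apply, map_sub, map_smul, smul_eq_mul,
    nsmul_eq_mul, Nat.cast_ofNat, Nat.add_one_sub_one, pow_one]
  field_simp

/-- The functional `J(x) = (1/2) ‖x - [x]ₛ‖²` is Fréchet differentiable at every
`x`, with derivative `h ↦ ⟪x - [x]ₛ, h⟫`, i.e. `DJ(x) = x - [x]ₛ`. -/
theorem hasFDerivAt_half_sq_dist_ballProj (s : ℝ) (hs : 0 < s) (x : E) :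
    HasFDerivAt (fun y : E => (1 / 2 : ℝ) * ‖y - ballProj s y‖ ^ 2)
      (innerSL ℝ (x - ballProj s x)) x := by
  rcases le_or_gt ‖x‖ s with hx | hx
  · rw [ballProj_of_norm_le hx, sub_self, map_zero]
    refine IsBigO.hasFDerivAt (n := 2) (IsBigO.of_norm_le fun y => ?_) one_lt_two
    have hd := pow_le_pow_left₀ (norm_nonneg _) (norm_sub_ballProj_le_norm_sub hs.le hx y) 2
    rw [Real.norm_of_nonneg (by positivity)]
    linarith [sq_nonneg ‖y - x‖]
  · have hx0 : x ≠ 0 := norm_pos_iff.1 (hs.trans hx)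
    have hJ : (fun y : E => (1 / 2 : ℝ) * ‖y - ballProj s y‖ ^ 2) =ᶠ[𝓝 x]
        fun y => (1 / 2 : ℝ) * (‖y‖ - s) ^ 2 := by
      filter_upwards [continuous_norm.continuousAt.eventually_const_lt hx] with y hy
      rw [norm_sub_ballProj hs.le, max_eq_left (by linarith)]
    rw [ballProj_of_lt_norm hx]
    exact (hasFDerivAt_half_sq_norm_sub_const s hx0).congr_of_eventuallyEq hJ
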